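/- Let T ≥ 1 and let G_T : ℝ^T → ℝ be as in the lower-bound construction. Then for every x ∈ ℝ^T and every i ∈ {1,…,T}, if x_i = 0 then ∂G_T/∂x_i (x) = 0. Consequently, prog₀(∇G_T(x)) ≤ prog₀(x), where prog₀(v) := max{i : v_i ≠ 0} (and 0 if v = 0). -/

import Mathlib

/-!
A coordinate `x_i` enters `G_T` only through `Λ(±x_i)` in the `i`-th summand and through
`Ψ(±x_i)` in the `(i+1)`-th. Both are flat at `x_i = 0`: `Λ` is even, and `Ψ` vanishes on
`(-∞, 1/2]`, so `Ψ(±t)` vanishes near `t = 0`. Hence the derivative of `G_T` along the `i`-th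
coordinate line through a point with `x_i = 0` is zero, and since `G_T` is differentiable, this is
the `i`-th component of its gradient. The support of `∇G_T(x)` thus lies in that of `x`.
-/

/-- The bump-like component function `Ψ` of the hard-instance construction. -/
noncomputable def Psi (x : ℝ) : ℝ :=
  if 1 / 2 < x then Real.exp (1 - 1 / (2 * x - 1) ^ 2) else 0

/-- The component function `Λ` of the hard-instance construction. -/
noncomputable def Lam (x : ℝ) : ℝ := 8 * (Real.exp (-x ^ 2 / 2) - 1)

/-- The hard instance `G_T(x) = Ψ(1)Λ(x₁) + ∑_{i=2}^T [Ψ(-x_{i-1})Λ(-x_i) + Ψ(x_{i-1})Λ(x_i)]`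
(coordinates are `0`-indexed in Lean: mathematical `x_i` is Lean's `x ⟨i-1, _⟩`). -/
noncomputable def G (T : ℕ) (x : EuclideanSpace ℝ (Fin T)) : ℝ :=
  ∑ i : Fin T,
    if (i : ℕ) = 0 then Psi 1 * Lam (x i)
    else
      Psi (-(x ⟨(i : ℕ) - 1, Nat.lt_of_le_of_lt (Nat.sub_le _ _) i.isLt⟩)) * Lam (-(x i)) +
        Psi (x ⟨(i : ℕ) - 1, Nat.lt_of_le_of_lt (Nat.sub_le _ _) i.isLt⟩) * Lam (x i)

/-- `prog₀(v) = max{i ∈ {1,…,T} : v_i ≠ 0}`, set to `0` if `v = 0`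
(mathematical index `i` corresponds to the Lean coordinate `j : Fin T` with `j + 1 = i`). -/
noncomputable def prog0 {T : ℕ} (v : EuclideanSpace ℝ (Fin T)) : ℕ :=
  sSup {i : ℕ | i = 0 ∨ ∃ j : Fin T, (j : ℕ) + 1 = i ∧ v j ≠ 0}

open Filter Topology

lemma hasDerivAt_mul_abs_zero : HasDerivAt (fun s : ℝ => s * |s|) 0 0 := by
  rw [hasDerivAt_iff_tendsto_slope_zero]
  have hslope :
      (fun t : ℝ => |t|) =ᶠ[𝓝[≠] 0] fun t => t⁻¹ • ((0 + t) * |0 + t| - 0 * |0|) := by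
    filter_upwards [self_mem_nhdsWithin] with t (ht : t ≠ 0)
    simp only [zero_add, abs_zero, mul_zero, sub_zero, smul_eq_mul]
    field_simp
  simpa using (continuous_abs.tendsto' 0 0 abs_zero).mono_left nhdsWithin_le_nhds |>.congr' hslope

lemma differentiable_mul_abs : Differentiable ℝ fun s : ℝ => s * |s| := by
  intro s
  rcases eq_or_ne s 0 with rfl | hs
  · exact hasDerivAt_mul_abs_zero.differentiableAt
  · exact differentiableAt_id.mul (differentiableAt_abs hs)

lemma Psi_eq_zero_of_le {x : ℝ} (hx : x ≤ 1 / 2) : Psi x = 0 := if_neg (not_lt.2 hx)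

/- `s ↦ s * |s|` is differentiable, equals `s ^ 2` for `s > 0` and is `≤ 0` otherwise, so this
exhibits `Ψ` as a composite of differentiable maps. -/
lemma Psi_eq_exp_one_mul_expNegInvGlue (x : ℝ) :
    Psi x = Real.exp 1 * expNegInvGlue ((2 * x - 1) * |2 * x - 1|) := by
  rcases le_or_gt x (1 / 2) with hx | hx
  · have hneg : (2 * x - 1) * |2 * x - 1| ≤ 0 :=
      mul_nonpos_of_nonpos_of_nonneg (by linarith) (abs_nonneg _)
    rw [Psi_eq_zero_of_le hx, expNegInvGlue.zero_of_nonpos hneg, mul_zero]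
  · have hpos : 0 < 2 * x - 1 := by linarith
    rw [Psi, if_pos hx, abs_of_pos hpos, expNegInvGlue, if_neg (not_le.2 (by positivity)),
      ← Real.exp_add]
    ring_nf

@[fun_prop]
lemma differentiable_Psi : Differentiable ℝ Psi := by
  rw [funext Psi_eq_exp_one_mul_expNegInvGlue]
  have hglue : Differentiable ℝ expNegInvGlue :=
    (expNegInvGlue.contDiff (n := 1)).differentiable one_ne_zero
  have hlin : Differentiable ℝ fun x : ℝ => 2 * x - 1 := by fun_prop
  exact (hglue.comp (differentiable_mul_abs.comp hlin)).const_mul _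

lemma Psi_eventuallyEq_zero_nhds_zero : Psi =ᶠ[𝓝 0] 0 := by
  filter_upwards [Iio_mem_nhds (by norm_num : (0 : ℝ) < 1 / 2)] with t ht
  exact Psi_eq_zero_of_le ht.le

lemma hasDerivAt_Psi_zero : HasDerivAt Psi 0 0 :=
  (hasDerivAt_const 0 0).congr_of_eventuallyEq Psi_eventuallyEq_zero_nhds_zero

@[fun_prop]
lemma differentiable_Lam : Differentiable ℝ Lam := by
  unfold Lam
  fun_prop

lemma hasDerivAt_Lam_zero : HasDerivAt Lam 0 0 := by
  have := (((hasDerivAt_pow 2 (0 : ℝ)).neg.div_const 2).exp.sub_const 1).const_mul 8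
  unfold Lam
  simpa using this

lemma HasDerivAt.comp_neg_zero {φ : ℝ → ℝ} (hφ : HasDerivAt φ 0 0) :
    HasDerivAt (fun t => φ (-t)) 0 0 := by
  have hφ' : HasDerivAt φ 0 (-0) := by rwa [neg_zero]
  simpa [Function.comp_def] using hφ'.scomp (0 : ℝ) (hasDerivAt_neg 0)

lemma hasDerivAt_comp_coord_line {ι : Type*} [Fintype ι] [DecidableEq ι] {φ : ℝ → ℝ}
    (hφ : HasDerivAt φ 0 0) {x : EuclideanSpace ℝ ι} {k : ι} (hk : x k = 0) (j : ι) :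
    HasDerivAt
      (fun t : ℝ => φ ((x + t • EuclideanSpace.single k (1 : ℝ) : EuclideanSpace ℝ ι) j)) 0 0 := by
  by_cases hj : j = k
  · subst hj
    simpa [hk] using hφ
  · simpa [hj] using hasDerivAt_const (0 : ℝ) (φ (x j))

lemma differentiable_G (T : ℕ) : Differentiable ℝ (G T) := by
  unfold G
  refine Differentiable.fun_sum fun i _ => ?_
  split_ifs <;> fun_prop

lemma hasDerivAt_G_line_zero (T : ℕ) {x : EuclideanSpace ℝ (Fin T)} {k : Fin T} (hk : x k = 0) :
    HasDerivAt (fun t : ℝ => G T (x + t • EuclideanSpace.single k 1)) 0 0 := by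
  have hΨ := hasDerivAt_comp_coord_line hasDerivAt_Psi_zero hk
  have hΨneg := hasDerivAt_comp_coord_line hasDerivAt_Psi_zero.comp_neg_zero hk
  have hΛ := hasDerivAt_comp_coord_line hasDerivAt_Lam_zero hk
  have hΛneg := hasDerivAt_comp_coord_line hasDerivAt_Lam_zero.comp_neg_zero hk
  unfold G
  refine (HasDerivAt.fun_sum (A' := fun _ => 0) fun i _ => ?_).congr_deriv (by simp)
  by_cases hi : (i : ℕ) = 0
  · simp only [hi, ↓reduceIte]
    exact ((hΛ i).const_mul (Psi 1)).congr_deriv (by simp)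
  · simp only [hi, ↓reduceIte]
    exact (((hΨneg _).fun_mul (hΛneg i)).fun_add ((hΨ _).fun_mul (hΛ i))).congr_deriv (by simp)

lemma EuclideanSpace.gradient_apply {ι : Type*} [Fintype ι] [DecidableEq ι]
    (f : EuclideanSpace ℝ ι → ℝ) (x : EuclideanSpace ℝ ι) (k : ι) :
    gradient f x k = fderiv ℝ f x (EuclideanSpace.single k 1) := by
  rw [← toDual_gradient, InnerProductSpace.toDual_apply_apply, EuclideanSpace.inner_single_right]
  simp

lemma gradient_G_apply_eq_zero (T : ℕ) {x : EuclideanSpace ℝ (Fin T)} {k : Fin T}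
    (hk : x k = 0) : gradient (G T) x k = 0 := by
  rw [EuclideanSpace.gradient_apply]
  exact ((differentiable_G T x).hasFDerivAt.hasLineDerivAt _).unique (hasDerivAt_G_line_zero T hk)

lemma prog0_le_prog0_of_forall_eq_zero {T : ℕ} {v w : EuclideanSpace ℝ (Fin T)}
    (h : ∀ j, v j = 0 → w j = 0) :
    prog0 w ≤ prog0 v := by
  have hbdd : BddAbove {i : ℕ | i = 0 ∨ ∃ j : Fin T, (j : ℕ) + 1 = i ∧ v j ≠ 0} := by
    refine ⟨T, ?_⟩
    rintro a (rfl | ⟨j, rfl, -⟩)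
    · exact Nat.zero_le _
    · exact j.isLt
  refine csSup_le ⟨0, Or.inl rfl⟩ ?_
  rintro a (rfl | ⟨j, rfl, hj⟩)
  · exact Nat.zero_le _
  · exact le_csSup hbdd (Or.inr ⟨j, rfl, fun hv => hj (h j hv)⟩)

theorem stmt_15 (T : ℕ) (x : EuclideanSpace ℝ (Fin T)) :
    (∀ i : Fin T, x i = 0 → gradient (G T) x i = 0) ∧
    prog0 (gradient (G T) x) ≤ prog0 x :=
  ⟨fun _ => gradient_G_apply_eq_zero T,
    prog0_le_prog0_of_forall_eq_zero fun _ => gradient_G_apply_eq_zero T⟩
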